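/- Let G = (V, w) be a weighted graph and u, v distinct nodes with w(u,v) ≥ 0. Then ν_G({u,v}) ≥ max( ν̂_f(u,v), ν̂_s(u,v) ), where ν̂_f(u,v) = 2|w(u,v)| − min(‖w^(u)‖, ‖w^(v)‖) is the fast score and ν̂_s(u,v) = 2|w(u,v)| − (1/2)·Σ_{z∈V} |w(u,z) − w(v,z)| is the similarity score. In particular, if max(ν̂_f(u,v), ν̂_s(u,v)) > 0 then {u,v} is non-separable. -/

import Mathlib

open Finset

variable {V : Type*}

/-- Cut capacity of a cut `S` in the weighted graph `(V, w)`: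
`c(S) = Σ_{u ∈ S, v ∈ V \ S} w(u,v)`. -/
noncomputable def cutVal [Fintype V] [DecidableEq V] (w : V → V → ℝ) (S : Finset V) : ℝ :=
  ∑ u ∈ S, ∑ v ∈ Sᶜ, w u v

/-- Minimum cut value `MC(G) = min_{S ⊆ V} c(S)` (cuts range over all subsets). -/
noncomputable def minCutVal [Fintype V] [DecidableEq V] (w : V → V → ℝ) : ℝ :=
  sInf (Set.range (cutVal w))

/-- `S` separates `X` iff `X ∩ S ∉ {∅, X}`. -/
def Separates [DecidableEq V] (S X : Finset V) : Prop :=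
  X ∩ S ≠ ∅ ∧ X ∩ S ≠ X

/-- `X` is non-separable: no min-cut separates `X`. -/
def NonSepSet [Fintype V] [DecidableEq V] (w : V → V → ℝ) (X : Finset V) : Prop :=
  ∀ S : Finset V, cutVal w S = minCutVal w → ¬ Separates S X

/-- `X` is weakly non-separable: some min-cut separates `X` and some min-cut does not. -/
def WeakNonSepSet [Fintype V] [DecidableEq V] (w : V → V → ℝ) (X : Finset V) : Prop :=
  (∃ S : Finset V, cutVal w S = minCutVal w ∧ Separates S X) ∧
  (∃ S : Finset V, cutVal w S = minCutVal w ∧ ¬ Separates S X)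

/-- Non-separability index
`ν_G(X) = min_{S ⊆ V, S ⊖ X} c(S) − min_{S ⊆ V, ¬(S ⊖ X)} c(S)`. -/
noncomputable def nuIdx [Fintype V] [DecidableEq V] (w : V → V → ℝ) (X : Finset V) : ℝ :=
  sInf (cutVal w '' {S : Finset V | Separates S X}) -
  sInf (cutVal w '' {S : Finset V | ¬ Separates S X})

/-!
Let `S` separate `u` from `v`, say `u ∈ S`, `v ∉ S`. Moving `u` across (`S.erase u`) or
moving `v` across (`insert v S`) yields two cuts that do not separate `{u, v}`, and each move
changes the cut value by the weight `w(u,v)` plus a signed sum of the weights from the moved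
vertex to `V \ {u, v}`. Bounding the signed sums by absolute values gives the fast score for
the better of the two moves and the similarity score for their average.
-/

noncomputable def fastScore [Fintype V] (w : V → V → ℝ) (u v : V) : ℝ :=
  2 * |w u v| - min (∑ z, |w u z|) (∑ z, |w v z|)

noncomputable def similarityScore [Fintype V] (w : V → V → ℝ) (u v : V) : ℝ :=
  2 * |w u v| - (1 / 2) * ∑ z, |w u z - w v z|

theorem separates_pair_iff [DecidableEq V] {S : Finset V} {u v : V} :
    Separates S {u, v} ↔ (u ∈ S ↔ v ∉ S) := by
  by_cases hu : u ∈ S <;> by_cases hv : v ∈ S <;>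
    simp [Separates, Finset.ext_iff, hu, hv] <;> rintro rfl <;> contradiction

section

variable [Fintype V] [DecidableEq V] {w : V → V → ℝ}

theorem cutVal_compl (hsymm : ∀ a b, w a b = w b a) (S : Finset V) :
    cutVal w Sᶜ = cutVal w S := by
  rw [cutVal, cutVal, compl_compl, Finset.sum_comm]
  exact Finset.sum_congr rfl fun a _ => Finset.sum_congr rfl fun b _ => hsymm b a

theorem cutVal_insert (hsymm : ∀ a b, w a b = w b a) {S : Finset V} {x : V} (hx : x ∉ S) :
    cutVal w (insert x S) =
      cutVal w S + ∑ b ∈ (insert x S)ᶜ, w x b - ∑ a ∈ S, w x a := by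
  have hcompl : Sᶜ = insert x (insert x S)ᶜ := by
    ext z; by_cases hz : z = x <;> simp [hz, hx]
  have hx' : x ∉ (insert x S)ᶜ := by simp
  simp only [cutVal, Finset.sum_insert hx]
  rw [hcompl]
  simp only [Finset.sum_insert hx', Finset.sum_add_distrib, hsymm _ x]
  ring

theorem abs_sum_sub_sum_le_sum_abs_sub_abs_sub_abs (f : V → ℝ)
    {A B : Finset V} (hAB : Disjoint A B) {u v : V} (huv : u ≠ v)
    (hu : u ∉ A ∪ B) (hv : v ∉ A ∪ B) :
    |∑ b ∈ B, f b - ∑ a ∈ A, f a| ≤ ∑ z, |f z| - |f u| - |f v| := by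
  have hsigned : |∑ b ∈ B, f b - ∑ a ∈ A, f a| ≤ ∑ z ∈ A ∪ B, |f z| :=
    calc |∑ b ∈ B, f b - ∑ a ∈ A, f a|
        ≤ |∑ b ∈ B, f b| + |∑ a ∈ A, f a| := abs_sub _ _
      _ ≤ ∑ b ∈ B, |f b| + ∑ a ∈ A, |f a| :=
          add_le_add (Finset.abs_sum_le_sum_abs _ _) (Finset.abs_sum_le_sum_abs _ _)
      _ = ∑ z ∈ A ∪ B, |f z| := by rw [Finset.sum_union hAB, add_comm]
  have htotal : |f u| + |f v| + ∑ z ∈ A ∪ B, |f z| ≤ ∑ z, |f z| := by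
    have hv' : v ∉ insert u (A ∪ B) := by simp [Ne.symm huv, hv]
    calc |f u| + |f v| + ∑ z ∈ A ∪ B, |f z|
        = ∑ z ∈ insert v (insert u (A ∪ B)), |f z| := by
          rw [Finset.sum_insert hv', Finset.sum_insert hu]; ring
      _ ≤ ∑ z, |f z| :=
          Finset.sum_le_univ_sum_of_nonneg fun _ => abs_nonneg _
  linarith

theorem exists_not_separates_add_le_cutVal_of_mem_of_notMem (hsymm : ∀ a b, w a b = w b a)
    (hdiag : ∀ a, w a a = 0) {u v : V} (huv : u ≠ v) (hw : 0 ≤ w u v)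
    {S : Finset V} (hu : u ∈ S) (hv : v ∉ S) :
    ∃ T, ¬ Separates T {u, v} ∧
      max (fastScore w u v) (similarityScore w u v) + cutVal w T ≤ cutVal w S := by
  set A := S.erase u
  set B := (insert v S)ᶜ
  have huA : u ∉ A := Finset.notMem_erase u S
  have hvB : v ∉ B := by simp [B]
  have hS : insert u A = S := Finset.insert_erase hu
  have hSc : Sᶜ = insert v B := by
    ext z; by_cases hz : z = v <;> simp [B, hz, hv]
  have hAB : Disjoint A B := by
    simp only [A, B, Finset.disjoint_left, Finset.mem_erase, Finset.mem_compl,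
      Finset.mem_insert]
    tauto
  have hu' : u ∉ A ∪ B := by simp [A, B, hu]
  have hv' : v ∉ A ∪ B := by simp [A, B, hv]
  have hcutA : cutVal w S = cutVal w A + (w u v + ∑ b ∈ B, w u b) - ∑ a ∈ A, w u a := by
    rw [← Finset.sum_insert hvB, ← hSc, ← hS, cutVal_insert hsymm huA]
  have hcutB : cutVal w (insert v S) =
      cutVal w S + ∑ b ∈ B, w v b - (w u v + ∑ a ∈ A, w v a) := by
    rw [← hsymm v u, ← Finset.sum_insert huA, hS, cutVal_insert hsymm hv]
  have hbound (f : V → ℝ) :=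
    abs_le.mp (abs_sum_sub_sum_le_sum_abs_sub_abs_sub_abs f hAB huv hu' hv')
  have hboundU := (hbound (w u)).1
  have hboundV := (hbound (w v)).2
  have hboundD := (hbound (w u - w v)).1
  simp only [Pi.sub_apply, Finset.sum_sub_distrib, hdiag, hsymm v u, abs_zero, zero_sub,
    sub_zero, abs_neg, abs_of_nonneg hw] at hboundU hboundV hboundD
  have hnotA : ¬ Separates A {u, v} := by simp [separates_pair_iff, A, hv]
  have hnotB : ¬ Separates (insert v S) {u, v} := by simp [separates_pair_iff, hu]
  simp only [fastScore, similarityScore, abs_of_nonneg hw, ← le_sub_iff_add_le]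
  rcases le_total (cutVal w A) (cutVal w (insert v S)) with hle | hge
  · refine ⟨A, hnotA, max_le ?_ (by linarith)⟩
    rcases min_choice (∑ z, |w u z|) (∑ z, |w v z|) with h | h <;> linarith
  · refine ⟨insert v S, hnotB, max_le ?_ (by linarith)⟩
    rcases min_choice (∑ z, |w u z|) (∑ z, |w v z|) with h | h <;> linarith

theorem exists_not_separates_add_le_cutVal (hsymm : ∀ a b, w a b = w b a)
    (hdiag : ∀ a, w a a = 0) {u v : V} (huv : u ≠ v) (hw : 0 ≤ w u v)
    {S : Finset V} (hS : Separates S {u, v}) :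
    ∃ T, ¬ Separates T {u, v} ∧
      max (fastScore w u v) (similarityScore w u v) + cutVal w T ≤ cutVal w S := by
  rw [separates_pair_iff] at hS
  by_cases hu : u ∈ S
  · exact exists_not_separates_add_le_cutVal_of_mem_of_notMem hsymm hdiag huv hw hu (hS.mp hu)
  · rw [← cutVal_compl hsymm]
    exact exists_not_separates_add_le_cutVal_of_mem_of_notMem hsymm hdiag huv hw
      (Finset.mem_compl.mpr hu) (by simpa using mt hS.mpr hu)

theorem le_nuIdx {X : Finset V} {ν : ℝ} (hX : ∃ S, Separates S X)
    (h : ∀ S, Separates S X → ∃ T, ¬ Separates T X ∧ ν + cutVal w T ≤ cutVal w S) :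
    ν ≤ nuIdx w X := by
  obtain ⟨S₀, hS₀⟩ := hX
  have hbdd : BddBelow (cutVal w '' {T | ¬ Separates T X}) := (Set.toFinite _).bddBelow
  rw [nuIdx, le_sub_iff_add_le]
  refine le_csInf ⟨cutVal w S₀, S₀, hS₀, rfl⟩ ?_
  rintro _ ⟨S, hS, rfl⟩
  obtain ⟨T, hT, hle⟩ := h S hS
  linarith [csInf_le hbdd ⟨T, hT, rfl⟩]

theorem nonSepSet_of_nuIdx_pos {X : Finset V} (hpos : 0 < nuIdx w X) : NonSepSet w X := by
  intro S hS hsep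
  have hne : (cutVal w '' {T | ¬ Separates T X}).Nonempty :=
    ⟨_, ∅, fun h => h.1 (Finset.inter_empty X), rfl⟩
  have hsepInf : sInf (cutVal w '' {T | Separates T X}) ≤ minCutVal w :=
    hS ▸ csInf_le (Set.toFinite _).bddBelow ⟨S, hsep, rfl⟩
  have hminInf : minCutVal w ≤ sInf (cutVal w '' {T | ¬ Separates T X}) := by
    refine le_csInf hne ?_
    rintro _ ⟨T, -, rfl⟩
    exact csInf_le (Set.finite_range _).bddBelow ⟨T, rfl⟩
  rw [nuIdx] at hpos
  linarith

end

theorem statement_16_general [Fintype V] [DecidableEq V]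
    (w : V → V → ℝ) (hsymm : ∀ a b, w a b = w b a) (hdiag : ∀ a, w a a = 0)
    (u v : V) (huv : u ≠ v) (hw : 0 ≤ w u v) :
    max (2 * |w u v| - min (∑ z, |w u z|) (∑ z, |w v z|))
        (2 * |w u v| - (1 / 2) * ∑ z, |w u z - w v z|) ≤ nuIdx w {u, v} ∧
    (0 < max (2 * |w u v| - min (∑ z, |w u z|) (∑ z, |w v z|))
             (2 * |w u v| - (1 / 2) * ∑ z, |w u z - w v z|) →
      NonSepSet w {u, v}) := by
  have hbound : max (fastScore w u v) (similarityScore w u v) ≤ nuIdx w {u, v} :=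
    le_nuIdx ⟨{u}, by simp [separates_pair_iff, huv.symm]⟩
      fun _ hS => exists_not_separates_add_le_cutVal hsymm hdiag huv hw hS
  exact ⟨hbound, fun hpos => nonSepSet_of_nuIdx_pos (hpos.trans_le hbound)⟩

/-- for `w(u,v) ≥ 0`, `ν_G({u,v}) ≥ max(ν̂_f(u,v), ν̂_s(u,v))` where
`ν̂_f(u,v) = 2|w(u,v)| − min(‖w⁽ᵘ⁾‖, ‖w⁽ᵛ⁾‖)` and
`ν̂_s(u,v) = 2|w(u,v)| − ½ Σ_z |w(u,z) − w(v,z)|`; in particular if the max is positive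
then `{u,v}` is non-separable. -/
theorem statement_16 [Fintype V] [DecidableEq V] [Nonempty V]
    (w : V → V → ℝ) (hsymm : ∀ a b, w a b = w b a) (hdiag : ∀ a, w a a = 0)
    (u v : V) (huv : u ≠ v) (hw : 0 ≤ w u v) :
    max (2 * |w u v| - min (∑ z, |w u z|) (∑ z, |w v z|))
        (2 * |w u v| - (1 / 2) * ∑ z, |w u z - w v z|) ≤ nuIdx w {u, v} ∧
    (0 < max (2 * |w u v| - min (∑ z, |w u z|) (∑ z, |w v z|))
             (2 * |w u v| - (1 / 2) * ∑ z, |w u z - w v z|) →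
      NonSepSet w {u, v}) :=
  statement_16_general w hsymm hdiag u v huv hw
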